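/- Let d ≥ 2 and n ≥ d+2, and suppose N(n-1, d) ≤ C(n-1,d)/2 and N(n-1, d-1) ≤ C(n-1,d-1)/2, where N(m,k) denotes the minimum size of a perfect family of k-subsets of [m]. Then N(n,d) ≤ C(n,d)/2. (This uses Pascal's rule C(n-1,d) + C(n-1,d-1) = C(n,d) and the gluing construction A ∪ { b ∪ {n} : b ∈ B₁ }.) -/

import Mathlib

/-!
Split `[m + 1]` at its top element `m + 1`. If `A` is a perfect family of `(d + 1)`-subsets of
`[m]` and `B` a perfect family of `d`-subsets of `[m]`, then `A ∪ {b ∪ {m + 1} : b ∈ B}` is a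
perfect family of `(d + 1)`-subsets of `[m + 1]`: a test set avoiding `m + 1` is served by `A`,
one containing `m + 1` is served, after removing `m + 1`, by `B`. Its size is at most
`|A| + |B|`, so Pascal's rule carries the bound `2 N ≤ C(·, ·)` from `[m]` to `[m + 1]`.
-/

/-- `M` is a family of `d`-element subsets of `[n] = {1,...,n}`. -/
def isFam (n d : ℕ) (M : Finset (Finset ℕ)) : Prop :=
  ∀ a ∈ M, a ⊆ Finset.Icc 1 n ∧ a.card = d

/-- Every `(d+1)`-subset of `[n]` contains a member of `M`. -/
def upperPerfect (n d : ℕ) (M : Finset (Finset ℕ)) : Prop :=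
  ∀ u : Finset ℕ, u ⊆ Finset.Icc 1 n → u.card = d + 1 → ∃ a ∈ M, a ⊆ u

/-- Every `(d-1)`-subset of `[n]` is contained in a member of `M`. -/
def lowerPerfect (n d : ℕ) (M : Finset (Finset ℕ)) : Prop :=
  ∀ u : Finset ℕ, u ⊆ Finset.Icc 1 n → u.card = d - 1 → ∃ a ∈ M, u ⊆ a

/-- `M` is perfect: both upper and lower perfect. -/
def perfectFam (n d : ℕ) (M : Finset (Finset ℕ)) : Prop :=
  upperPerfect n d M ∧ lowerPerfect n d M

open Finset

def glue (m : ℕ) (A B : Finset (Finset ℕ)) : Finset (Finset ℕ) :=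
  A ∪ B.image (insert (m + 1))

lemma erase_subset_Icc_of_subset_Icc_succ {m : ℕ} {u : Finset ℕ}
    (hu : u ⊆ Icc 1 (m + 1)) : u.erase (m + 1) ⊆ Icc 1 m := by
  intro x hx
  obtain ⟨hxm, hxu⟩ := mem_erase.mp hx
  have := mem_Icc.mp (hu hxu)
  exact mem_Icc.mpr ⟨this.1, by omega⟩

lemma isFam_glue {m d : ℕ} {A B : Finset (Finset ℕ)}
    (hA : isFam m (d + 1) A) (hB : isFam m d B) : isFam (m + 1) (d + 1) (glue m A B) := by
  have hIcc : Icc 1 m ⊆ Icc 1 (m + 1) := Icc_subset_Icc_right (Nat.le_succ m)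
  intro a ha
  rcases mem_union.mp ha with ha | ha
  · exact ⟨(hA a ha).1.trans hIcc, (hA a ha).2⟩
  · obtain ⟨b, hb, rfl⟩ := mem_image.mp ha
    obtain ⟨hbIcc, hbcard⟩ := hB b hb
    have htop : m + 1 ∉ b := fun h => by simpa using hbIcc h
    refine ⟨insert_subset (by simp) (hbIcc.trans hIcc), ?_⟩
    rw [card_insert_of_notMem htop, hbcard]

lemma upperPerfect_glue {m d : ℕ} {A B : Finset (Finset ℕ)}
    (hA : upperPerfect m (d + 1) A) (hB : upperPerfect m d B) :
    upperPerfect (m + 1) (d + 1) (glue m A B) := by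
  intro u hu hcard
  have hlow := erase_subset_Icc_of_subset_Icc_succ hu
  by_cases htop : m + 1 ∈ u
  · obtain ⟨b, hb, hbu⟩ := hB _ hlow (by rw [card_erase_of_mem htop, hcard]; rfl)
    refine ⟨insert (m + 1) b, mem_union_right _ (mem_image_of_mem _ hb), ?_⟩
    exact insert_subset htop (hbu.trans (erase_subset _ _))
  · rw [erase_eq_of_notMem htop] at hlow
    obtain ⟨a, ha, hau⟩ := hA u hlow hcard
    exact ⟨a, mem_union_left _ ha, hau⟩

lemma lowerPerfect_glue {m d : ℕ} {A B : Finset (Finset ℕ)}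
    (hA : lowerPerfect m (d + 1) A) (hB : lowerPerfect m d B) :
    lowerPerfect (m + 1) (d + 1) (glue m A B) := by
  intro u hu hcard
  have hlow := erase_subset_Icc_of_subset_Icc_succ hu
  by_cases htop : m + 1 ∈ u
  · obtain ⟨b, hb, hub⟩ := hB _ hlow (by rw [card_erase_of_mem htop, hcard]; rfl)
    refine ⟨insert (m + 1) b, mem_union_right _ (mem_image_of_mem _ hb), ?_⟩
    rw [← insert_erase htop]
    exact insert_subset_insert _ hub
  · rw [erase_eq_of_notMem htop] at hlow
    obtain ⟨a, ha, hua⟩ := hA u hlow hcard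
    exact ⟨a, mem_union_left _ ha, hua⟩

lemma perfectFam_glue {m d : ℕ} {A B : Finset (Finset ℕ)}
    (hA : perfectFam m (d + 1) A) (hB : perfectFam m d B) :
    perfectFam (m + 1) (d + 1) (glue m A B) :=
  ⟨upperPerfect_glue hA.1 hB.1, lowerPerfect_glue hA.2 hB.2⟩

lemma card_glue_le (m : ℕ) (A B : Finset (Finset ℕ)) :
    (glue m A B).card ≤ A.card + B.card :=
  (card_union_le _ _).trans (Nat.add_le_add_left card_image_le _)

theorem stmt_16 (n d : ℕ) (hd : 2 ≤ d) (hn : d + 2 ≤ n)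
    (hA : ∃ A : Finset (Finset ℕ), isFam (n - 1) d A ∧ perfectFam (n - 1) d A ∧
      2 * A.card ≤ (n - 1).choose d)
    (hB : ∃ B : Finset (Finset ℕ), isFam (n - 1) (d - 1) B ∧
      perfectFam (n - 1) (d - 1) B ∧ 2 * B.card ≤ (n - 1).choose (d - 1)) :
    ∃ M : Finset (Finset ℕ), isFam n d M ∧ perfectFam n d M ∧
      2 * M.card ≤ n.choose d := by
  obtain ⟨m, rfl⟩ : ∃ m, n = m + 1 := ⟨n - 1, by omega⟩
  obtain ⟨k, rfl⟩ : ∃ k, d = k + 1 := ⟨d - 1, by omega⟩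
  obtain ⟨A, hAfam, hAperf, hAcard⟩ := hA
  obtain ⟨B, hBfam, hBperf, hBcard⟩ := hB
  simp only [Nat.add_sub_cancel] at *
  refine ⟨glue m A B, isFam_glue hAfam hBfam, perfectFam_glue hAperf hBperf, ?_⟩
  have := card_glue_le m A B
  rw [Nat.choose_succ_succ']
  omega
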